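/- arXiv:1110.0461 — 6 statements merged into one kernel-verified Lean document; each statement's English description precedes it below -/
import Mathlib

section
/- Every log-supermodular function of arity at most 2 lies in the class C, i.e. for every pinning F' of such a function (of arity k') and every w ∈ {0,1}^{k'}, B(F',w) ≥ 0. -/
open Finset

/-- The "dot product" of two Boolean vectors, as a natural number. -/
def dotB {k : ℕ} (x w : Fin k → Bool) : ℕ := ∑ i, if x i && w i then 1 else 0

/-- B(F,w) = ∑_x F(x)·F(𝟙-x)·(-1)^{x·w}. -/
noncomputable def Bfn {k : ℕ} (F : (Fin k → Bool) → NNReal) (w : Fin k → Bool) : ℝ :=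
  ∑ x : Fin k → Bool, (F x : ℝ) * (F (fun i => !x i) : ℝ) * (-1 : ℝ) ^ (dotB x w)

/-- `IsPinning F F'` : F' is obtained from F by a (possibly empty) sequence of
primitive pinnings (fixing a coordinate to a Boolean value). -/
inductive IsPinning : ∀ {k k' : ℕ}, ((Fin k → Bool) → NNReal) → ((Fin k' → Bool) → NNReal) → Prop
  | refl {k} (F : (Fin k → Bool) → NNReal) : IsPinning F F
  | pin {k k'} (F : (Fin k → Bool) → NNReal) (G : (Fin (k' + 1) → Bool) → NNReal)
      (i : Fin (k' + 1)) (v : Bool) :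
      IsPinning F G → IsPinning F (fun x => G (i.insertNth v x))

/-- Membership in the class C: every pinning F' of F satisfies B(F',w) ≥ 0 for all w. -/
def MemC {k : ℕ} (F : (Fin k → Bool) → NNReal) : Prop :=
  ∀ {k' : ℕ} (F' : (Fin k' → Bool) → NNReal), IsPinning F F' →
    ∀ w : Fin k' → Bool, 0 ≤ Bfn F' w

/-- Tensor product (F⊗G)(x,y) = F(x)·G(y). -/
def tensor {k l : ℕ} (F : (Fin k → Bool) → NNReal) (G : (Fin l → Bool) → NNReal) :
    (Fin (k + l) → Bool) → NNReal :=
  fun x => F (fun i => x (Fin.castAdd l i)) * G (fun j => x (Fin.natAdd k j))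

/-- Primitive contraction (tr_{1,2}F)(x₃,…,x_k) = ∑_z F(z,z,x₃,…,x_k). -/
def tr12 {k : ℕ} (F : (Fin (k + 2) → Bool) → NNReal) : (Fin k → Bool) → NNReal :=
  fun x => ∑ z : Bool, F (Fin.cons z (Fin.cons z x))

/-- Log-supermodularity. -/
def IsLSM {k : ℕ} (F : (Fin k → Bool) → NNReal) : Prop :=
  ∀ x y : Fin k → Bool, F x * F y ≤ F (fun i => x i || y i) * F (fun i => x i && y i)

def EQ1f : (Fin 1 → Bool) → NNReal := fun _ => 1

def EQ2f : (Fin 2 → Bool) → NNReal := fun x => if x 0 = x 1 then 1 else 0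

def EQ3f : (Fin 3 → Bool) → NNReal := fun x => if x 0 = x 1 ∧ x 1 = x 2 then 1 else 0

def IMPf : (Fin 2 → Bool) → NNReal := fun x => if x 0 = true ∧ x 1 = false then 0 else 1

/-- Membership in the functional clone ⟨𝓖, EQ₂⟩: F is represented by a pps-formula
over 𝓖 ∪ {EQ₂}, i.e. a summation over m bound Boolean variables of a product of
atomic applications. -/
def CloneMem (𝓖 : ∀ k : ℕ, ((Fin k → Bool) → NNReal) → Prop) (n : ℕ)
    (F : (Fin n → Bool) → NNReal) : Prop :=
  ∃ (m s : ℕ) (a : Fin s → ℕ) (G : ∀ j : Fin s, (Fin (a j) → Bool) → NNReal)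
    (idx : ∀ j : Fin s, Fin (a j) → Fin (n + m)),
    (∀ j, 𝓖 (a j) (G j) ∨
      ∃ h : a j = 2, G j = fun x => EQ2f (fun t => x (Fin.cast h.symm t))) ∧
    ∀ x, F x = ∑ y : Fin m → Bool, ∏ j, G j (fun t => Fin.append x y (idx j t))

/-- pps_ω-definability of F over 𝓖: some finite subset S_F of 𝓖 such that F is
approximated arbitrarily well in sup-norm by functions of the clone ⟨S_F, EQ₂⟩. -/
def PpsOmegaDef (𝓖 : ∀ k : ℕ, ((Fin k → Bool) → NNReal) → Prop) (n : ℕ)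
    (F : (Fin n → Bool) → NNReal) : Prop :=
  ∃ SF : ∀ k : ℕ, ((Fin k → Bool) → NNReal) → Prop,
    (∀ k H, SF k H → 𝓖 k H) ∧
    Set.Finite {p : Σ k : ℕ, (Fin k → Bool) → NNReal | SF p.1 p.2} ∧
    ∀ ε : ℝ, 0 < ε → ∃ Fh : (Fin n → Bool) → NNReal, CloneMem SF n Fh ∧
      ∀ x, |(Fh x : ℝ) - (F x : ℝ)| < ε

/-- The symmetric arity-4 function S of the paper. -/
def Sfn : (Fin 4 → Bool) → NNReal := fun x =>
  if (∑ i, if x i then 1 else 0 : ℕ) = 4 then 4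
  else if (∑ i, if x i then 1 else 0 : ℕ) = 3 then 2 else 1


lemma lsm_pin' {k : ℕ} (G : (Fin (k+1) → Bool) → NNReal) (hG : IsLSM G) (i : Fin (k+1)) (v : Bool) :
    IsLSM (fun x => G (i.insertNth v x)) := by
  intro x y
  set X : Fin (k+1) → Bool := i.insertNth v x with hX
  set Y : Fin (k+1) → Bool := i.insertNth v y with hY
  have h1 : (fun j => X j || Y j) = i.insertNth v (fun j => x j || y j) := by
    funext j
    refine Fin.succAboveCases i ?_ ?_ j <;> simp [hX, hY]
  have h2 : (fun j => X j && Y j) = i.insertNth v (fun j => x j && y j) := by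
    funext j
    refine Fin.succAboveCases i ?_ ?_ j <;> simp [hX, hY]
  simpa [h1, h2] using hG X Y

lemma pin_facts' {k k' : ℕ} {F : (Fin k → Bool) → NNReal} {F' : (Fin k' → Bool) → NNReal}
    (h : IsPinning F F') (hF : IsLSM F) : IsLSM F' ∧ k' ≤ k := by
  induction h with
  | refl F => exact ⟨hF, le_refl _⟩
  | pin F G i v h ih =>
      obtain ⟨hG, hle⟩ := ih hF
      exact ⟨lsm_pin' G hG i v, le_trans (Nat.le_succ _) hle⟩

lemma B0' (F : (Fin 0 → Bool) → NNReal) (w : Fin 0 → Bool) : 0 ≤ Bfn F w := by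
  unfold Bfn
  apply Finset.sum_nonneg
  intro x _
  have : dotB x w = 0 := by simp [dotB]
  rw [this]
  positivity

lemma B1' (F : (Fin 1 → Bool) → NNReal) (w : Fin 1 → Bool) : 0 ≤ Bfn F w := by
  unfold Bfn
  rw [← Equiv.sum_comp (Equiv.funUnique (Fin 1) Bool).symm]
  have he : ((Equiv.funUnique (Fin 1) Bool).symm : Bool → Fin 1 → Bool) = fun b _ => b := rfl
  simp only [he]
  rw [Fintype.sum_bool]
  have hd : ∀ b, dotB (fun _ : Fin 1 => b) w = if b && w 0 then 1 else 0 := by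
    intro b; unfold dotB; rw [Fin.sum_univ_one]
  rw [hd, hd]
  cases hw : w 0
  · simp; positivity
  · simp [mul_comm]

lemma B2' (F : (Fin 2 → Bool) → NNReal) (hF : IsLSM F) (w : Fin 2 → Bool) : 0 ≤ Bfn F w := by
  unfold Bfn
  rw [← Equiv.sum_comp (piFinTwoEquiv (fun _ => Bool)).symm]
  have he : ((piFinTwoEquiv (fun _ => Bool)).symm : Bool × Bool → Fin 2 → Bool)
      = fun p => ![p.1, p.2] := by
    funext p j
    fin_cases j <;> rfl
  simp only [he]
  rw [Fintype.sum_prod_type, Fintype.sum_bool, Fintype.sum_bool, Fintype.sum_bool]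
  have hd : ∀ a b, dotB ![a, b] w = (if a && w 0 then 1 else 0) + (if b && w 1 then 1 else 0) := by
    intro a b; unfold dotB; rw [Fin.sum_univ_two]; rfl
  have hn : ∀ a b : Bool, (fun i => !(![a,b] i)) = ![!a, !b] := by
    intro a b; funext j; fin_cases j <;> rfl
  simp only [hd, hn]
  have key := hF ![false, true] ![true, false]
  have h1 : (fun i => ![false,true] i || ![true,false] i) = ![true,true] := by
    funext j; fin_cases j <;> rfl
  have h2 : (fun i => ![false,true] i && ![true,false] i) = ![false,false] := by
    funext j; fin_cases j <;> rfl
  rw [h1, h2] at key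
  have key' : (F ![false,true] : ℝ) * (F ![true,false] : ℝ) ≤ (F ![true,true] : ℝ) * (F ![false,false] : ℝ) := by
    exact_mod_cast key
  cases hw0 : w 0 <;> cases hw1 : w 1 <;> simp
  · positivity
  · nlinarith [key', mul_nonneg (F ![true,true]).coe_nonneg (F ![false,false]).coe_nonneg]
  · nlinarith [key', mul_nonneg (F ![true,true]).coe_nonneg (F ![false,false]).coe_nonneg]
  · nlinarith [key', mul_nonneg (F ![true,true]).coe_nonneg (F ![false,false]).coe_nonneg]

theorem stmt4 {k : ℕ} (hk : k ≤ 2) (F : (Fin k → Bool) → NNReal) (hF : IsLSM F) :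
    MemC F := by
  intro k' F' hpin w
  obtain ⟨hLSM, hle⟩ := pin_facts' hpin hF
  have hle2 : k' ≤ 2 := le_trans hle hk
  interval_cases k'
  · exact B0' F' w
  · exact B1' F' w
  · exact B2' F' hLSM w
end

section
/- For F : {0,1}^k → ℝ≥0 with k ≥ 2 and w ∈ {0,1}^{k-2}, one has B(tr_{1,2}F, w) = B((F_{2↦0})_{1↦0}, w) + B((F_{2↦1})_{1↦1}, w) + (B(F,(0,0,w)) + B(F,(1,1,w)))/2. -/
open Finset

theorem stmt8 {k : ℕ} (F : (Fin (k + 2) → Bool) → NNReal) (w : Fin k → Bool) :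
    Bfn (tr12 F) w =
      Bfn (fun x => F (Fin.cons false (Fin.cons false x))) w +
      Bfn (fun x => F (Fin.cons true (Fin.cons true x))) w +
      (Bfn F (Fin.cons false (Fin.cons false w)) +
        Bfn F (Fin.cons true (Fin.cons true w))) / 2 := by
  classical
  have hnot : ∀ {n : ℕ} (z : Bool) (x : Fin n → Bool),
      (fun i => !(Fin.cons z x : Fin (n+1) → Bool) i) = Fin.cons (!z) (fun i => !x i) := by
    intro n z x; funext i
    refine Fin.cases ?_ ?_ i <;> simp
  have hdot : ∀ {n : ℕ} (z b : Bool) (x v : Fin n → Bool),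
      dotB (Fin.cons z x : Fin (n+1) → Bool) (Fin.cons b v) = (if z && b then 1 else 0) + dotB x v := by
    intro n z b x v
    simp only [dotB, Fin.sum_univ_succ, Fin.cons_zero, Fin.cons_succ]
  have hsum : ∀ {n : ℕ} (g : (Fin (n+1) → Bool) → ℝ),
      ∑ x : Fin (n+1) → Bool, g x = ∑ z : Bool, ∑ x : Fin n → Bool, g (Fin.cons z x) := by
    intro n g
    calc ∑ x : Fin (n+1) → Bool, g x
        = ∑ p : Bool × (Fin n → Bool), g (Fin.cons p.1 p.2) :=
          (Fintype.sum_equiv (Fin.consEquiv fun _ => Bool) _ _ fun p => rfl).symm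
      _ = ∑ z : Bool, ∑ x : Fin n → Bool, g (Fin.cons z x) := Fintype.sum_prod_type _
  simp only [Bfn, tr12]
  simp only [hsum, hnot, hdot, NNReal.coe_sum, Fintype.sum_bool, Bool.and_self,
    Bool.and_false, Bool.and_true, Bool.false_and, Bool.true_and, Bool.not_true,
    Bool.not_false, if_true, if_false, pow_add, pow_one, pow_zero]
  simp only [← Finset.sum_add_distrib, Finset.sum_div]
  refine Finset.sum_congr rfl fun x _ => ?_
  push_cast
  norm_num
  ring
end

section
/- The class C (functions all of whose pinnings F' satisfy B(F',w) ≥ 0 for all w) is closed under tensor products. -/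
open Finset

-- helper: value of succAbove
lemma succAbove_val' {N : ℕ} (p : Fin (N + 1)) (c : Fin N) :
    (p.succAbove c).val = if c.val < p.val then c.val else c.val + 1 := by
  rw [Fin.succAbove]
  split_ifs with h1 h2 h3 <;>
    simp_all [Fin.lt_def, Fin.castSucc, Fin.val_succ] <;> omega

-- reindexing a pin
lemma insertNth_reindex {n N : ℕ} (eh : Fin (n + 1) ≃ Fin (N + 1)) (i : Fin (n + 1)) (v : Bool) :
    ∃ e' : Fin n ≃ Fin N, ∀ (x : Fin n → Bool) (q : Fin (N + 1)),
      (Fin.insertNth (α := fun _ => Bool) i v x) (eh.symm q)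
        = (Fin.insertNth (α := fun _ => Bool) (eh i) v (fun r => x (e'.symm r))) q := by
  set E : Option (Fin n) ≃ Option (Fin N) :=
    ((finSuccEquiv' i).symm.trans eh).trans (finSuccEquiv' (eh i)) with hE
  refine ⟨E.removeNone, ?_⟩
  have key : ∀ r : Fin N, eh.symm ((eh i).succAbove r) = i.succAbove (E.removeNone.symm r) := by
    intro r
    set z := eh.symm ((eh i).succAbove r) with hz
    have hzi : z ≠ i := by
      intro h
      have : (eh i).succAbove r = eh i := by
        have := congrArg eh h
        simpa [hz] using this
      exact Fin.succAbove_ne _ _ this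
    obtain ⟨c, hc⟩ := Fin.exists_succAbove_eq hzi
    have hEsymm : E.symm (some r) = some c := by
      simp only [hE, Equiv.symm_trans_apply]
      rw [finSuccEquiv'_symm_some]
      show finSuccEquiv' i (eh.symm ((eh i).succAbove r)) = some c
      rw [← hz, ← hc, finSuccEquiv'_succAbove]
    have h2 : some (E.symm.removeNone r) = E.symm (some r) :=
      Equiv.removeNone_some _ ⟨c, hEsymm⟩
    rw [hEsymm] at h2
    rw [Equiv.removeNone_symm]
    have : E.symm.removeNone r = c := by exact Option.some_injective _ h2
    rw [this, hc]
  intro x q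
  rcases eq_or_ne q (eh i) with rfl | hq
  · rw [Fin.insertNth_apply_same]
    have : eh.symm (eh i) = i := Equiv.symm_apply_apply _ _
    rw [this, Fin.insertNth_apply_same]
  · obtain ⟨r, rfl⟩ := Fin.exists_succAbove_eq hq
    rw [Fin.insertNth_apply_succAbove, key r, Fin.insertNth_apply_succAbove]

-- Bfn under reindexing
lemma Bfn_reindex {n N : ℕ} (K : (Fin N → Bool) → NNReal) (e : Fin n ≃ Fin N)
    (w : Fin n → Bool) :
    Bfn (fun x => K (fun j => x (e.symm j))) w = Bfn K (fun j => w (e.symm j)) := by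
  unfold Bfn
  refine Fintype.sum_equiv (Equiv.arrowCongr e (Equiv.refl Bool)) _ _ (fun x => ?_)
  have hdot : dotB x w = dotB (fun j => x (e.symm j)) (fun j => w (e.symm j)) := by
    unfold dotB
    exact Fintype.sum_equiv e _ _ (fun i => by simp)
  simp [Equiv.arrowCongr, Function.comp_def, hdot]

-- Bfn of tensor factorizes
lemma Bfn_tensor {k l : ℕ} (F : (Fin k → Bool) → NNReal) (G : (Fin l → Bool) → NNReal)
    (w : Fin (k + l) → Bool) :
    Bfn (tensor F G) w
      = Bfn F (fun i => w (Fin.castAdd l i)) * Bfn G (fun j => w (Fin.natAdd k j)) := by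
  classical
  let myE : ((Fin k → Bool) × (Fin l → Bool)) ≃ (Fin (k + l) → Bool) :=
  { toFun := fun p => Fin.append p.1 p.2
    invFun := fun x => (fun i => x (Fin.castAdd l i), fun j => x (Fin.natAdd k j))
    left_inv := fun p => by
      refine Prod.ext ?_ ?_ <;> funext q <;> simp [Fin.append_left, Fin.append_right]
    right_inv := fun x => by
      funext q
      refine Fin.addCases (fun i => ?_) (fun j => ?_) q
      · simp [Fin.append_left]
      · simp [Fin.append_right] }
  unfold Bfn
  rw [Finset.sum_mul_sum, ← Equiv.sum_comp myE, Fintype.sum_prod_type]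
  refine Finset.sum_congr rfl fun a _ => Finset.sum_congr rfl fun b _ => ?_
  have h1 : (fun i => !(myE (a, b)) i) = myE (fun i => !a i, fun j => !b j) := by
    funext q
    refine Fin.addCases (fun i => ?_) (fun j => ?_) q
    · simp [myE, Fin.append_left]
    · simp [myE, Fin.append_right]
  have h2 : ∀ (u : Fin k → Bool) (v : Fin l → Bool), tensor F G (myE (u, v)) = F u * G v := by
    intro u v; simp [tensor, myE, Fin.append_left, Fin.append_right]
  have h3 : dotB (myE (a, b)) w
      = dotB a (fun i => w (Fin.castAdd l i)) + dotB b (fun j => w (Fin.natAdd k j)) := by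
    unfold dotB
    rw [Fin.sum_univ_add]
    simp [myE, Fin.append_left, Fin.append_right]
  rw [h1, h2, h2, h3, pow_add]
  push_cast
  ring

/-- Tailored recursion principle for pinnings. -/
lemma IsPinning.elim' {a b : ℕ} {S : (Fin a → Bool) → NNReal} {H : (Fin b → Bool) → NNReal}
    (h : IsPinning S H) (P : ∀ {k'}, ((Fin k' → Bool) → NNReal) → Prop)
    (hbase : P S)
    (hstep : ∀ {k'} (K : (Fin (k' + 1) → Bool) → NNReal) (i : Fin (k' + 1)) (v : Bool),
      P K → P (fun x => K (i.insertNth v x))) : P H := by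
  induction h with
  | refl F0 => exact hbase
  | pin F0 G0 i v h ih => exact hstep _ i v (ih hbase)

def Decomp {k l k'' : ℕ} (F : (Fin k → Bool) → NNReal) (G : (Fin l → Bool) → NNReal)
    (H : (Fin k'' → Bool) → NNReal) : Prop :=
  ∃ (kF lF : ℕ) (F' : (Fin kF → Bool) → NNReal) (G' : (Fin lF → Bool) → NNReal)
    (e : Fin k'' ≃ Fin (kF + lF)),
    IsPinning F F' ∧ IsPinning G G' ∧ ∀ x, H x = tensor F' G' (fun j => x (e.symm j))

lemma decomp_pin {k l k'' : ℕ} {F : (Fin k → Bool) → NNReal} {G : (Fin l → Bool) → NNReal}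
    {H : (Fin (k'' + 1) → Bool) → NNReal} (hd : Decomp F G H) (i : Fin (k'' + 1)) (v : Bool) :
    Decomp F G (fun x => H (i.insertNth v x)) := by
  obtain ⟨kF, lF, F', G', e, hF', hG', hx⟩ := hd
  by_cases hp : (e i).val < kF
  · -- pin lands in the F part
    obtain ⟨m, rfl⟩ : ∃ m, kF = m + 1 := ⟨kF - 1, by omega⟩
    set eM : Fin ((m + 1) + lF) ≃ Fin ((m + lF) + 1) := finCongr (by omega) with heM
    set eh : Fin (k'' + 1) ≃ Fin ((m + lF) + 1) := e.trans eM with heh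
    obtain ⟨e', hins⟩ := insertNth_reindex eh i v
    set j : Fin (m + 1) := ⟨(e i).val, hp⟩ with hj
    refine ⟨m, lF, fun y => F' (j.insertNth v y), G', e',
      IsPinning.pin F F' j v hF', hG', fun x => ?_⟩
    have hsymm : ∀ q : Fin ((m + 1) + lF), e.symm q = eh.symm (eM q) := by
      intro q; simp [heh]
    have hmain : ∀ q : Fin ((m + 1) + lF),
        (Fin.insertNth (α := fun _ => Bool) i v x) (e.symm q)
          = (Fin.insertNth (α := fun _ => Bool) (eh i) v (fun r => x (e'.symm r))) (eM q) := by
      intro q; rw [hsymm q]; exact hins x (eM q)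
    have h1 : (eh i).val = (e i).val := rfl
    have hehi : eh i = eM (Fin.castAdd lF j) := Fin.ext rfl
    have hA : (fun a : Fin (m + 1) => (Fin.insertNth (α := fun _ => Bool) i v x)
          (e.symm (Fin.castAdd lF a)))
        = j.insertNth v (fun c => x (e'.symm (Fin.castAdd lF c))) := by
      funext a
      by_cases ha : a = j
      · subst ha
        have hi : e.symm (Fin.castAdd lF j) = i := by
          rw [hsymm, ← hehi, Equiv.symm_apply_apply]
        rw [hi, Fin.insertNth_apply_same, Fin.insertNth_apply_same]
      · obtain ⟨c, rfl⟩ := Fin.exists_succAbove_eq ha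
        have harith : eM (Fin.castAdd lF (j.succAbove c)) = (eh i).succAbove (Fin.castAdd lF c) := by
          apply Fin.ext
          simp only [heM, hj, h1, finCongr_apply, Fin.coe_cast, succAbove_val',
            Fin.coe_castAdd, Fin.coe_natAdd, Fin.val_mk]
          try (split_ifs <;> omega)
        rw [hmain, harith, Fin.insertNth_apply_succAbove, Fin.insertNth_apply_succAbove]
    have hB : (fun b : Fin lF => (Fin.insertNth (α := fun _ => Bool) i v x)
          (e.symm (Fin.natAdd (m + 1) b)))
        = (fun b => x (e'.symm (Fin.natAdd m b))) := by
      funext b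
      have harith : eM (Fin.natAdd (m + 1) b) = (eh i).succAbove (Fin.natAdd m b) := by
        apply Fin.ext
        simp only [heM, hj, h1, finCongr_apply, Fin.coe_cast, succAbove_val',
          Fin.coe_castAdd, Fin.coe_natAdd, Fin.val_mk]
        try (split_ifs <;> omega)
      rw [hmain, harith, Fin.insertNth_apply_succAbove]
    show H (i.insertNth v x) = _
    rw [hx]
    show F' (fun a => (Fin.insertNth (α := fun _ => Bool) i v x) (e.symm (Fin.castAdd lF a)))
        * G' (fun b => (Fin.insertNth (α := fun _ => Bool) i v x) (e.symm (Fin.natAdd (m + 1) b)))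
      = F' (j.insertNth v (fun c => x (e'.symm (Fin.castAdd lF c))))
        * G' (fun b => x (e'.symm (Fin.natAdd m b)))
    rw [hA, hB]
  · -- pin lands in the G part
    have hlt : (e i).val < kF + lF := (e i).isLt
    obtain ⟨n, rfl⟩ : ∃ n, lF = n + 1 := ⟨lF - 1, by omega⟩
    set eM : Fin (kF + (n + 1)) ≃ Fin ((kF + n) + 1) := finCongr (by omega) with heM
    set eh : Fin (k'' + 1) ≃ Fin ((kF + n) + 1) := e.trans eM with heh
    obtain ⟨e', hins⟩ := insertNth_reindex eh i v
    set j : Fin (n + 1) := ⟨(e i).val - kF, by omega⟩ with hj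
    refine ⟨kF, n, F', fun y => G' (j.insertNth v y), e',
      hF', IsPinning.pin G G' j v hG', fun x => ?_⟩
    have hsymm : ∀ q : Fin (kF + (n + 1)), e.symm q = eh.symm (eM q) := by
      intro q; simp [heh]
    have hmain : ∀ q : Fin (kF + (n + 1)),
        (Fin.insertNth (α := fun _ => Bool) i v x) (e.symm q)
          = (Fin.insertNth (α := fun _ => Bool) (eh i) v (fun r => x (e'.symm r))) (eM q) := by
      intro q; rw [hsymm q]; exact hins x (eM q)
    have h1 : (eh i).val = (e i).val := rfl
    have hehi : eh i = eM (Fin.natAdd kF j) := by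
      apply Fin.ext
      show (e i).val = kF + ((e i).val - kF)
      omega
    have hA : (fun a : Fin kF => (Fin.insertNth (α := fun _ => Bool) i v x)
          (e.symm (Fin.castAdd (n + 1) a)))
        = (fun a => x (e'.symm (Fin.castAdd n a))) := by
      funext a
      have harith : eM (Fin.castAdd (n + 1) a) = (eh i).succAbove (Fin.castAdd n a) := by
        apply Fin.ext
        simp only [heM, hj, h1, finCongr_apply, Fin.coe_cast, succAbove_val',
          Fin.coe_castAdd, Fin.coe_natAdd, Fin.val_mk]
        try (split_ifs <;> omega)
      rw [hmain, harith, Fin.insertNth_apply_succAbove]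
    have hB : (fun b : Fin (n + 1) => (Fin.insertNth (α := fun _ => Bool) i v x)
          (e.symm (Fin.natAdd kF b)))
        = j.insertNth v (fun c => x (e'.symm (Fin.natAdd kF c))) := by
      funext b
      by_cases hb : b = j
      · subst hb
        have hi : e.symm (Fin.natAdd kF j) = i := by
          rw [hsymm, ← hehi, Equiv.symm_apply_apply]
        rw [hi, Fin.insertNth_apply_same, Fin.insertNth_apply_same]
      · obtain ⟨c, rfl⟩ := Fin.exists_succAbove_eq hb
        have harith : eM (Fin.natAdd kF (j.succAbove c)) = (eh i).succAbove (Fin.natAdd kF c) := by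
          apply Fin.ext
          simp only [heM, hj, h1, finCongr_apply, Fin.coe_cast, succAbove_val',
            Fin.coe_castAdd, Fin.coe_natAdd, Fin.val_mk]
          try (try (split_ifs <;> omega))
        rw [hmain, harith, Fin.insertNth_apply_succAbove, Fin.insertNth_apply_succAbove]
    show H (i.insertNth v x) = _
    rw [hx]
    show F' (fun a => (Fin.insertNth (α := fun _ => Bool) i v x) (e.symm (Fin.castAdd (n + 1) a)))
        * G' (fun b => (Fin.insertNth (α := fun _ => Bool) i v x) (e.symm (Fin.natAdd kF b)))
      = F' (fun a => x (e'.symm (Fin.castAdd n a)))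
        * G' (j.insertNth v (fun c => x (e'.symm (Fin.natAdd kF c))))
    rw [hA, hB]

theorem stmt9 {k l : ℕ} (F : (Fin k → Bool) → NNReal) (G : (Fin l → Bool) → NNReal)
    (hF : MemC F) (hG : MemC G) : MemC (tensor F G) := by
  intro k'' H hpin w
  have hd : Decomp F G H := by
    refine hpin.elim' (fun {k'} K => Decomp F G K) ?_ (fun K i v h => decomp_pin h i v)
    exact ⟨k, l, F, G, Equiv.refl _, IsPinning.refl F, IsPinning.refl G, fun x => rfl⟩
  obtain ⟨kF, lF, F', G', e, hF', hG', hx⟩ := hd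
  have hH : H = fun x => tensor F' G' (fun j => x (e.symm j)) := funext hx
  rw [hH, Bfn_reindex, Bfn_tensor]
  exact mul_nonneg (hF F' hF' _) (hG G' hG' _)
end

section
/- The class C (functions all of whose pinnings F' satisfy B(F',w) ≥ 0 for all w) is closed under primitive contraction tr_{1,2}. -/
open Finset

lemma pinning_trans {k1 k2 k3 : ℕ} {F : (Fin k1 → Bool) → NNReal}
    {G : (Fin k2 → Bool) → NNReal} {H : (Fin k3 → Bool) → NNReal}
    (h2 : IsPinning G H) : IsPinning F G → IsPinning F H := by
  induction h2 with
  | refl => exact fun h => h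
  | pin A B i v _ ih => exact fun h => IsPinning.pin _ _ i v (ih h)

lemma memC_of_pinning {k k' : ℕ} {F : (Fin k → Bool) → NNReal} {G : (Fin k' → Bool) → NNReal}
    (hF : MemC F) (h : IsPinning F G) : MemC G :=
  fun F' h' w => hF F' (pinning_trans h' h) w

lemma cons_insertNth {n : ℕ} (p : Fin (n + 1)) (v z : Bool) (x : Fin n → Bool) :
    (Fin.cons z (p.insertNth v x) : Fin (n + 2) → Bool)
      = Fin.insertNth (α := fun _ => Bool) p.succ v (Fin.cons z x) := by
  have h0 : Fin.insertNth (α := fun _ => Bool) p.succ v (Fin.cons z x) 0 = z := by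
    have h := Fin.insertNth_apply_succAbove (α := fun _ => Bool) p.succ v (Fin.cons z x) 0
    rwa [Fin.succ_succAbove_zero, Fin.cons_zero] at h
  funext j
  refine Fin.cases ?_ ?_ j
  · rw [Fin.cons_zero, h0]
  · intro i
    rw [Fin.cons_succ]
    refine Fin.succAboveCases
      (α := fun i => Fin.insertNth (α := fun _ => Bool) p v x i
        = Fin.insertNth (α := fun _ => Bool) p.succ v (Fin.cons z x) i.succ) p ?_ ?_ i
    · simp only [Fin.insertNth_apply_same]
    · intro i'
      beta_reduce
      have h1 := Fin.insertNth_apply_succAbove (α := fun _ => Bool) p.succ v (Fin.cons z x) i'.succ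
      rw [Fin.succ_succAbove_succ] at h1
      rw [Fin.insertNth_apply_succAbove, h1, Fin.cons_succ]

lemma pinning_tr12_aux {k0 k' : ℕ} {F0 : (Fin k0 → Bool) → NNReal}
    {F' : (Fin k' → Bool) → NNReal} (h : IsPinning F0 F') :
    ∀ {k : ℕ} (F : (Fin (k + 2) → Bool) → NNReal), k0 = k → HEq F0 (tr12 F) →
    ∃ G : (Fin (k' + 2) → Bool) → NNReal, IsPinning F G ∧ F' = tr12 G := by
  induction h with
  | refl F0 =>
    intro k F hk hF
    subst hk
    obtain rfl : F0 = tr12 F := heq_iff_eq.mp hF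
    exact ⟨F, IsPinning.refl F, rfl⟩
  | pin F0 H i v hTH ih =>
    intro k F hk hF
    obtain ⟨G, hG, rfl⟩ := ih F hk hF
    refine ⟨fun y => G (i.succ.succ.insertNth v y), IsPinning.pin F G i.succ.succ v hG, ?_⟩
    funext x
    show tr12 G (i.insertNth v x) = _
    unfold tr12
    refine Finset.sum_congr rfl fun z _ => ?_
    rw [cons_insertNth, cons_insertNth]

lemma sum_split {n : ℕ} (f : (Fin (n + 1) → Bool) → ℝ) :
    ∑ y : Fin (n + 1) → Bool, f y = ∑ z : Bool, ∑ x : Fin n → Bool, f (Fin.cons z x) := by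
  rw [← (Fin.consEquiv fun _ => Bool).sum_comp f, Fintype.sum_prod_type]
  rfl

lemma dotB_cons {n : ℕ} (a b : Bool) (x w : Fin n → Bool) :
    dotB (Fin.cons a x) (Fin.cons b w) = (if a && b then 1 else 0) + dotB x w := by
  unfold dotB
  rw [Fin.sum_univ_succ]
  simp

lemma not_cons {n : ℕ} (a : Bool) (x : Fin n → Bool) :
    (fun i => ! (Fin.cons a x : Fin (n + 1) → Bool) i)
      = (Fin.cons (!a) (fun i => !x i) : Fin (n + 1) → Bool) := by
  funext i
  cases i using Fin.cases <;> simp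

noncomputable def Paux {k : ℕ} (G : (Fin (k + 2) → Bool) → NNReal) (w : Fin k → Bool)
    (z z' : Bool) : ℝ :=
  ∑ x : Fin k → Bool, (G (Fin.cons z (Fin.cons z x)) : ℝ) *
    (G (Fin.cons z' (Fin.cons z' (fun i => !x i))) : ℝ) * (-1 : ℝ) ^ (dotB x w)

lemma bfn_pin {k : ℕ} (G : (Fin (k + 2) → Bool) → NNReal) (w : Fin k → Bool) (z : Bool) :
    Bfn (fun x => G (Fin.cons z (Fin.cons z x))) w = Paux G w z z := rfl

lemma bfn_tr12 {k : ℕ} (G : (Fin (k + 2) → Bool) → NNReal) (w : Fin k → Bool) :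
    Bfn (tr12 G) w = Paux G w false false + Paux G w false true +
      Paux G w true false + Paux G w true true := by
  unfold Bfn tr12 Paux
  rw [← Finset.sum_add_distrib, ← Finset.sum_add_distrib, ← Finset.sum_add_distrib]
  refine Finset.sum_congr rfl fun x _ => ?_
  push_cast
  rw [Fintype.sum_bool, Fintype.sum_bool]
  ring

lemma bfn_cc {k : ℕ} (G : (Fin (k + 2) → Bool) → NNReal) (w : Fin k → Bool) :
    Bfn G (Fin.cons false (Fin.cons false w)) + Bfn G (Fin.cons true (Fin.cons true w)) =
      2 * Paux G w false true + 2 * Paux G w true false := by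
  unfold Bfn Paux
  simp only [sum_split, Fintype.sum_bool, not_cons, dotB_cons, Bool.and_self, Bool.and_true,
    Bool.and_false, Bool.not_true, Bool.not_false, if_true, if_false, pow_add, pow_one, pow_zero,
    Fin.cons_zero, Fin.cons_succ]
  norm_num
  simp only [Finset.mul_sum, ← Finset.sum_neg_distrib, ← Finset.sum_add_distrib]
  refine Finset.sum_congr rfl fun x _ => ?_
  ring

lemma tr12_nonneg {k : ℕ} (G : (Fin (k + 2) → Bool) → NNReal) (hG : MemC G)
    (w : Fin k → Bool) : 0 ≤ Bfn (tr12 G) w := by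
  have hp : ∀ z : Bool, IsPinning G (fun x => G (Fin.cons z (Fin.cons z x))) := by
    intro z
    have h := IsPinning.pin G (fun y => G ((0 : Fin (k + 2)).insertNth z y)) 0 z
      (IsPinning.pin G G 0 z (IsPinning.refl G))
    simpa [Fin.insertNth_zero'] using h
  have n1 := hG _ (hp false) w
  have n2 := hG _ (hp true) w
  have n3 := hG G (IsPinning.refl G) (Fin.cons false (Fin.cons false w))
  have n4 := hG G (IsPinning.refl G) (Fin.cons true (Fin.cons true w))
  rw [bfn_pin] at n1 n2
  have h3 := bfn_cc G w
  rw [bfn_tr12]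
  linarith

theorem stmt10 {k : ℕ} (F : (Fin (k + 2) → Bool) → NNReal) (hF : MemC F) :
    MemC (tr12 F) := by
  intro k' F' hpin w
  obtain ⟨G, hG, rfl⟩ := pinning_tr12_aux hpin F rfl HEq.rfl
  exact tr12_nonneg G (memC_of_pinning hF hG) w
end

section
/- For the function S : {0,1}⁴ → ℝ≥0 with S(x) = 4 if ∑xᵢ=4, 2 if ∑xᵢ=3, and 1 otherwise, one has B(S,(1,1,1,1)) = −2 < 0; consequently S is not in the class C. -/
open Finset

lemma sum_succ_pi {n : ℕ} (f : (Fin (n+1) → Bool) → ℝ) :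
    ∑ x, f x = ∑ b : Bool, ∑ y : Fin n → Bool, f (Fin.cons b y) := by
  rw [← (Fin.consEquiv (fun _ => Bool)).sum_comp f, Fintype.sum_prod_type]
  rfl

lemma sum_zero_pi (f : (Fin 0 → Bool) → ℝ) : ∑ x, f x = f ![] := by
  rw [Fintype.sum_eq_single (![] : Fin 0 → Bool)]
  intro x hx; exact absurd (funext fun i => i.elim0) hx

lemma hc_aux (a b c d : Bool) :
    Fin.cons a (Fin.cons b (Fin.cons c (Fin.cons d ![]))) = ![a,b,c,d] := rfl

lemma hneg_aux (a b c d : Bool) : (fun i => !(![a,b,c,d] i)) = ![!a,!b,!c,!d] := by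
  funext i; fin_cases i <;> rfl

lemma bfn_S_eval : Bfn Sfn (fun _ => true) = -2 := by
  rw [Bfn]
  simp only [sum_succ_pi, sum_zero_pi, Fintype.sum_bool, hc_aux, hneg_aux]
  simp only [Sfn, dotB, Fin.sum_univ_four, Matrix.cons_val_zero, Matrix.cons_val_one,
    Matrix.head_cons, Matrix.cons_val_two, Matrix.tail_cons, Matrix.cons_val_three,
    Bool.and_true]
  norm_num

theorem stmt18 : Bfn Sfn (fun _ => true) = -2 ∧ ¬ MemC Sfn := by
  refine ⟨bfn_S_eval, fun h => ?_⟩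
  have := h Sfn (IsPinning.refl Sfn) (fun _ => true)
  rw [bfn_S_eval] at this
  linarith
end

section
/- There exists a log-supermodular function S : {0,1}⁴ → ℝ≥0 that is not pps_ω-definable over {IMP} ∪ 𝓑₁; hence the pps_ω-definable functional clone generated by IMP and all unary nonnegative functions is a proper subset of LSM. -/
open Finset

namespace Aux

variable {k : ℕ}

def agr (A : Finset (Fin k)) (τ x : Fin k → Bool) : Prop := ∀ i, i ∉ A → x i = τ i

instance (A : Finset (Fin k)) (τ x : Fin k → Bool) : Decidable (agr A τ x) := by
  unfold agr; infer_instance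

def flipA (A : Finset (Fin k)) (x : Fin k → Bool) : Fin k → Bool :=
  fun i => if i ∈ A then !x i else x i

def sgnA (A : Finset (Fin k)) (x w : Fin k → Bool) : ℝ :=
  ∏ i ∈ A, (if x i && w i then (-1 : ℝ) else 1)

noncomputable def B2 (F : (Fin k → Bool) → NNReal) (A : Finset (Fin k)) (τ w : Fin k → Bool) : ℝ :=
  ∑ x : Fin k → Bool, if agr A τ x then (F x : ℝ) * (F (flipA A x) : ℝ) * sgnA A x w else 0

def Qp (F : (Fin k → Bool) → NNReal) : Prop := ∀ A τ w, 0 ≤ B2 F A τ w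

lemma flipA_mem {A : Finset (Fin k)} {i : Fin k} (h : i ∈ A) (x : Fin k → Bool) :
    flipA A x i = !x i := by simp [flipA, h]

lemma flipA_not_mem {A : Finset (Fin k)} {i : Fin k} (h : i ∉ A) (x : Fin k → Bool) :
    flipA A x i = x i := by simp [flipA, h]

lemma flipA_update_not_mem {A : Finset (Fin k)} {i : Fin k} (h : i ∉ A) (x : Fin k → Bool) (b : Bool) :
    flipA A (Function.update x i b) = Function.update (flipA A x) i b := by
  funext j
  rcases eq_or_ne j i with rfl | hj
  · simp [flipA, h]
  · simp [flipA, Function.update_of_ne hj]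

lemma flipA_insert {A : Finset (Fin k)} (i : Fin k) (x : Fin k → Bool) :
    flipA (insert i A) x = Function.update (flipA A x) i (!x i) := by
  funext j
  rcases eq_or_ne j i with rfl | hj
  · simp [flipA]
  · simp [flipA, Function.update_of_ne hj, Finset.mem_insert, hj]

lemma sgnA_update_x {A : Finset (Fin k)} {i : Fin k} (h : i ∉ A) (x w : Fin k → Bool) (b : Bool) :
    sgnA A (Function.update x i b) w = sgnA A x w := by
  unfold sgnA
  refine Finset.prod_congr rfl fun j hj => ?_
  rw [Function.update_of_ne (by rintro rfl; exact h hj)]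

lemma sgnA_update_w {A : Finset (Fin k)} {i : Fin k} (h : i ∉ A) (x w : Fin k → Bool) (b : Bool) :
    sgnA A x (Function.update w i b) = sgnA A x w := by
  unfold sgnA
  refine Finset.prod_congr rfl fun j hj => ?_
  rw [Function.update_of_ne (by rintro rfl; exact h hj)]

lemma sgnA_insert {A : Finset (Fin k)} {i : Fin k} (h : i ∉ A) (x w : Fin k → Bool) :
    sgnA (insert i A) x w = (if x i && w i then (-1 : ℝ) else 1) * sgnA A x w := by
  unfold sgnA; rw [Finset.prod_insert h]

lemma sgnA_extract {A : Finset (Fin k)} {i : Fin k} (h : i ∈ A) (x w : Fin k → Bool) :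
    sgnA A x w = (if x i && w i then (-1 : ℝ) else 1) * sgnA (A.erase i) x w := by
  unfold sgnA; rw [← Finset.mul_prod_erase _ (fun j => if x j && w j then (-1:ℝ) else 1) h]

lemma sgnA_flip_w {A : Finset (Fin k)} {i : Fin k} (h : i ∈ A) (x w : Fin k → Bool) :
    sgnA A x (Function.update w i (!w i)) = (if x i then (-1 : ℝ) else 1) * sgnA A x w := by
  rw [sgnA_extract h, sgnA_extract h, sgnA_update_w (Finset.notMem_erase i A)]
  rw [Function.update_self]
  cases hx : x i <;> cases hw : w i <;> simp

end Aux
namespace Aux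

variable {k : ℕ}

lemma agr_update_iff {A : Finset (Fin k)} {i : Fin k} (hi : i ∉ A) (τ x : Fin k → Bool) (b : Bool) :
    agr A (Function.update τ i b) x ↔ agr (insert i A) τ x ∧ x i = b := by
  constructor
  · intro h
    refine ⟨fun j hj => ?_, ?_⟩
    · have hjA : j ∉ A := fun hc => hj (Finset.mem_insert_of_mem hc)
      have hji : j ≠ i := fun hc => hj (by simp [hc])
      rw [h j hjA, Function.update_of_ne hji]
    · rw [h i hi, Function.update_self]
  · rintro ⟨h, hb⟩ j hj
    rcases eq_or_ne j i with rfl | hji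
    · rw [hb, Function.update_self]
    · rw [Function.update_of_ne hji]
      exact h j (by simp [hji, hj])

lemma agr_update_same {A : Finset (Fin k)} {i : Fin k} (hi : i ∈ A) (τ x : Fin k → Bool) (b : Bool) :
    agr A τ (Function.update x i b) ↔ agr A τ x := by
  constructor <;> intro h j hj
  · have := h j hj
    rwa [Function.update_of_ne (by rintro rfl; exact hj hi)] at this
  · rw [Function.update_of_ne (by rintro rfl; exact hj hi)]
    exact h j hj

/-- pointwise split of an `insert` condition -/
lemma ite_split_insert {M : Type*} [AddZeroClass M] {A : Finset (Fin k)} {i : Fin k} (hi : i ∉ A)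
    (τ x : Fin k → Bool) (g : M) :
    (if agr (insert i A) τ x then g else 0)
      = (if agr A (Function.update τ i false) x then g else 0)
        + (if agr A (Function.update τ i true) x then g else 0) := by
  by_cases h : agr (insert i A) τ x
  · cases hx : x i
    · rw [if_pos h, if_pos ((agr_update_iff hi τ x false).2 ⟨h, hx⟩),
        if_neg (fun hc => by simpa [hx] using ((agr_update_iff hi τ x true).1 hc).2), add_zero]
    · rw [if_pos h, if_pos ((agr_update_iff hi τ x true).2 ⟨h, hx⟩),
        if_neg (fun hc => by simpa [hx] using ((agr_update_iff hi τ x false).1 hc).2), zero_add]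
  · rw [if_neg h, if_neg, if_neg, add_zero]
    · exact fun hc => h ((agr_update_iff hi τ x true).1 hc).1
    · exact fun hc => h ((agr_update_iff hi τ x false).1 hc).1

/-- reindex a constrained sum by updating coordinate `i` -/
lemma sum_reindex_update {A : Finset (Fin k)} {i : Fin k} (h : i ∉ A) (τ : Fin k → Bool) (b : Bool)
    (g : (Fin k → Bool) → ℝ) :
    (∑ x : Fin k → Bool, if agr A (Function.update τ i b) x then g x else 0)
      = ∑ x : Fin k → Bool, if agr A τ x then g (Function.update x i b) else 0 := by
  rw [← Finset.sum_filter, ← Finset.sum_filter]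
  refine Finset.sum_nbij' (fun x => Function.update x i (τ i)) (fun x => Function.update x i b)
    ?_ ?_ ?_ ?_ ?_
  · intro x hx
    rw [Finset.mem_filter] at hx ⊢
    refine ⟨Finset.mem_univ _, fun j hj => ?_⟩
    rcases eq_or_ne j i with rfl | hji
    · rw [Function.update_self]
    · rw [Function.update_of_ne hji]
      have := hx.2 j hj
      rwa [Function.update_of_ne hji] at this
  · intro x hx
    rw [Finset.mem_filter] at hx ⊢
    refine ⟨Finset.mem_univ _, fun j hj => ?_⟩
    rcases eq_or_ne j i with rfl | hji
    · rw [Function.update_self, Function.update_self]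
    · rw [Function.update_of_ne hji, Function.update_of_ne hji]
      exact hx.2 j hj
  · intro x hx
    rw [Finset.mem_filter] at hx
    have hxi : x i = b := by
      have := hx.2 i h; rwa [Function.update_self] at this
    funext j
    rcases eq_or_ne j i with rfl | hji
    · rw [Function.update_self, hxi]
    · rw [Function.update_of_ne hji, Function.update_of_ne hji]
  · intro x hx
    rw [Finset.mem_filter] at hx
    have hxi : x i = τ i := hx.2 i h
    funext j
    rcases eq_or_ne j i with rfl | hji
    · rw [Function.update_self, hxi]
    · rw [Function.update_of_ne hji, Function.update_of_ne hji]
  · intro x hx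
    rw [Finset.mem_filter] at hx
    have hxi : x i = b := by
      have := hx.2 i h; rwa [Function.update_self] at this
    have hkey : Function.update (Function.update x i (τ i)) i b = x := by
      funext j
      rcases eq_or_ne j i with rfl | hji
      · rw [Function.update_self, hxi]
      · rw [Function.update_of_ne hji, Function.update_of_ne hji]
    rw [hkey]

end Aux
namespace Aux

variable {k : ℕ}

lemma B2_eq_zero {F : (Fin k → Bool) → NNReal} {A : Finset (Fin k)} {i : Fin k} {τ w : Fin k → Bool}
    (hind : ∀ x b, F (Function.update x i b) = F x) (hi : i ∈ A) (hw : w i = true) :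
    B2 F A τ w = 0 := by
  have hinv : Function.Involutive (fun x : Fin k → Bool => Function.update x i (!x i)) := by
    intro x; funext j
    rcases eq_or_ne j i with rfl | hji
    · simp
    · simp [Function.update_of_ne hji]
  have hflip : ∀ x : Fin k → Bool,
      flipA A (Function.update x i (!x i)) = Function.update (flipA A x) i (x i) := by
    intro x; funext j
    rcases eq_or_ne j i with rfl | hji
    · simp [flipA, hi]
    · simp [flipA, Function.update_of_ne hji]
  have hsgn : ∀ x : Fin k → Bool,
      sgnA A (Function.update x i (!x i)) w = - sgnA A x w := by
    intro x
    rw [sgnA_extract hi (Function.update x i (!x i)) w, sgnA_extract hi x w,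
      sgnA_update_x (Finset.notMem_erase i A), Function.update_self, hw]
    cases hx : x i <;> simp
  have key : ∀ x : Fin k → Bool,
      (if agr A τ (Function.update x i (!x i)) then
          (F (Function.update x i (!x i)) : ℝ) * F (flipA A (Function.update x i (!x i)))
            * sgnA A (Function.update x i (!x i)) w else 0)
        = - (if agr A τ x then (F x : ℝ) * F (flipA A x) * sgnA A x w else 0) := by
    intro x
    by_cases hagr : agr A τ x
    · rw [if_pos ((agr_update_same hi τ x _).2 hagr), if_pos hagr, hind, hflip,
        hind (flipA A x) (x i), hsgn]
      ring
    · rw [if_neg (fun hc => hagr ((agr_update_same hi τ x _).1 hc)), if_neg hagr, neg_zero]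
  have h2 : B2 F A τ w
      = ∑ x : Fin k → Bool,
          (if agr A τ (Function.update x i (!x i)) then
            (F (Function.update x i (!x i)) : ℝ) * F (flipA A (Function.update x i (!x i)))
              * sgnA A (Function.update x i (!x i)) w else 0) :=
    (Fintype.sum_equiv hinv.toPerm _ _ (fun x => rfl)).symm
  have h3 : B2 F A τ w = - B2 F A τ w := by
    conv_lhs => rw [h2, Finset.sum_congr rfl (fun x _ => key x), Finset.sum_neg_distrib]
    rw [B2]
  linarith

lemma Qp_one : Qp (fun _ : Fin k → Bool => (1 : NNReal)) := by
  intro A τ w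
  by_cases hw : ∃ i ∈ A, w i = true
  · obtain ⟨i, hiA, hwi⟩ := hw
    rw [B2_eq_zero (F := fun _ => (1 : NNReal)) (fun _ _ => rfl) hiA hwi]
  · push_neg at hw
    apply Finset.sum_nonneg
    intro x _
    split_ifs
    · have hs : sgnA A x w = 1 := by
        refine Finset.prod_eq_one fun i hi => ?_
        have := hw i hi
        simp at this
        simp [this]
      simp [hs]
    · exact le_refl 0

def sumOut (i : Fin k) (F : (Fin k → Bool) → NNReal) : (Fin k → Bool) → NNReal :=
  fun x => F (Function.update x i false) + F (Function.update x i true)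

lemma sumOut_indep (i : Fin k) (F : (Fin k → Bool) → NNReal) :
    ∀ x b, sumOut i F (Function.update x i b) = sumOut i F x := by
  intro x b
  unfold sumOut
  rw [Function.update_idem, Function.update_idem]

lemma B2_sumOut {F : (Fin k → Bool) → NNReal} {i : Fin k} {A : Finset (Fin k)} (h : i ∉ A)
    (τ w : Fin k → Bool) :
    B2 (sumOut i F) A τ w
      = B2 F A (Function.update τ i false) w + B2 F A (Function.update τ i true) w
        + B2 F (insert i A) τ (Function.update w i false) := by
  have hins : ∀ (x : Fin k → Bool) (b : Bool),
      flipA (insert i A) (Function.update x i b) = Function.update (flipA A x) i (!b) := by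
    intro x b
    rw [flipA_insert, flipA_update_not_mem h, Function.update_idem, Function.update_self]
  have hsgnins : ∀ (x : Fin k → Bool) (b : Bool),
      sgnA (insert i A) (Function.update x i b) (Function.update w i false) = sgnA A x w := by
    intro x b
    rw [sgnA_insert h, Function.update_self, Function.update_self]
    rw [sgnA_update_x h, sgnA_update_w h]
    simp
  have e1 : ∀ b : Bool, B2 F A (Function.update τ i b) w
      = ∑ x : Fin k → Bool, if agr A τ x then
          (F (Function.update x i b) : ℝ) * F (Function.update (flipA A x) i b) * sgnA A x w
        else 0 := by
    intro b
    unfold B2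
    rw [sum_reindex_update h]
    refine Finset.sum_congr rfl fun x _ => ?_
    split_ifs with hc
    · rw [flipA_update_not_mem h, sgnA_update_x h]
    · rfl
  have e3 : B2 F (insert i A) τ (Function.update w i false)
      = (∑ x : Fin k → Bool, if agr A τ x then
            (F (Function.update x i false) : ℝ) * F (Function.update (flipA A x) i true)
              * sgnA A x w else 0)
        + (∑ x : Fin k → Bool, if agr A τ x then
            (F (Function.update x i true) : ℝ) * F (Function.update (flipA A x) i false)
              * sgnA A x w else 0) := by
    unfold B2
    rw [Finset.sum_congr rfl (fun x _ => ite_split_insert (M := ℝ) h τ x _),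
      Finset.sum_add_distrib, sum_reindex_update h, sum_reindex_update h]
    congr 1 <;> refine Finset.sum_congr rfl fun x _ => ?_ <;> split_ifs with hc <;>
      first
      | rfl
      | (rw [hins, hsgnins]; norm_num)
  rw [e1 false, e1 true, e3]
  unfold B2 sumOut
  rw [← Finset.sum_add_distrib, ← Finset.sum_add_distrib, ← Finset.sum_add_distrib]
  refine Finset.sum_congr rfl fun x _ => ?_
  split_ifs with hc
  · unfold flipA
    push_cast
    ring
  · simp

lemma Qp_sumOut {F : (Fin k → Bool) → NNReal} {i : Fin k} (hF : Qp F) : Qp (sumOut i F) := by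
  intro A τ w
  by_cases hiA : i ∈ A
  · cases hwi : w i
    · -- w i = false : split into two erase instances
      have hA : A = insert i (A.erase i) := (Finset.insert_erase hiA).symm
      have hsplit : B2 (sumOut i F) A τ w
          = B2 (sumOut i F) (A.erase i) τ w
            + B2 (sumOut i F) (A.erase i) (Function.update τ i (!τ i)) w := by
        unfold B2
        rw [← Finset.sum_add_distrib]
        refine Finset.sum_congr rfl fun x _ => ?_
        have c1 : agr (A.erase i) τ x ↔ agr A τ x ∧ x i = τ i := by
          conv_lhs => rw [show τ = Function.update τ i (τ i) from (Function.update_eq_self i τ).symm]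
          rw [agr_update_iff (Finset.notMem_erase i A), ← hA]
        have c2 : agr (A.erase i) (Function.update τ i (!τ i)) x ↔ agr A τ x ∧ x i = !τ i := by
          rw [agr_update_iff (Finset.notMem_erase i A), ← hA]
        have hGflip : sumOut i F (flipA A x) = sumOut i F (flipA (A.erase i) x) := by
          conv_lhs => rw [hA, flipA_insert]
          exact sumOut_indep i F _ _
        have hsg : sgnA A x w = sgnA (A.erase i) x w := by
          rw [sgnA_extract hiA, hwi]; simp
        by_cases hagr : agr A τ x
        · by_cases hxi : x i = τ i
          · rw [if_pos hagr, if_pos (c1.2 ⟨hagr, hxi⟩), if_neg, add_zero, hGflip, hsg]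
            intro hc
            have := (c2.1 hc).2
            rw [hxi] at this
            simp at this
          · have hxi' : x i = !τ i := by
              revert hxi; cases τ i <;> cases x i <;> simp
            rw [if_pos hagr, if_pos (c2.2 ⟨hagr, hxi'⟩), if_neg, zero_add, hGflip, hsg]
            exact fun hc => hxi (c1.1 hc).2
        · rw [if_neg hagr, if_neg (fun hc => hagr (c1.1 hc).1),
            if_neg (fun hc => hagr (c2.1 hc).1), add_zero]
      rw [hsplit, B2_sumOut (Finset.notMem_erase i A), B2_sumOut (Finset.notMem_erase i A)]
      have h1 := hF (A.erase i) (Function.update τ i false) w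
      have h2 := hF (A.erase i) (Function.update τ i true) w
      have h3 := hF (insert i (A.erase i)) τ (Function.update w i false)
      have h4 := hF (A.erase i) (Function.update (Function.update τ i (!τ i)) i false) w
      have h5 := hF (A.erase i) (Function.update (Function.update τ i (!τ i)) i true) w
      have h6 := hF (insert i (A.erase i)) (Function.update τ i (!τ i)) (Function.update w i false)
      linarith
    · rw [B2_eq_zero (sumOut_indep i F) hiA hwi]
  · rw [B2_sumOut hiA]
    have h1 := hF A (Function.update τ i false) w
    have h2 := hF A (Function.update τ i true) w
    have h3 := hF (insert i A) τ (Function.update w i false)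
    linarith

end Aux
namespace Aux

variable {k : ℕ}

lemma B2_const_mul {F G : (Fin k → Bool) → NNReal} {A : Finset (Fin k)} {τ w : Fin k → Bool}
    (c : ℝ) (hc : ∀ x, agr A τ x →
      (G x : ℝ) * G (flipA A x) = c * ((F x : ℝ) * F (flipA A x))) :
    B2 G A τ w = c * B2 F A τ w := by
  unfold B2
  rw [Finset.mul_sum]
  refine Finset.sum_congr rfl fun x _ => ?_
  split_ifs with h
  · linear_combination sgnA A x w * hc x h
  · ring

lemma Qp_mul_unary {F : (Fin k → Bool) → NNReal} (hF : Qp F) (P : Bool → NNReal) (i : Fin k) :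
    Qp (fun x => F x * P (x i)) := by
  intro A τ w
  by_cases hi : i ∈ A
  · rw [B2_const_mul (F := F) ((P false : ℝ) * P true) ?_]
    · exact mul_nonneg (mul_nonneg (P false).2 (P true).2) (hF A τ w)
    · intro x _
      have hfl : flipA A x i = !x i := flipA_mem hi x
      push_cast
      rw [hfl]
      cases hx : x i <;> simp only [Bool.not_false, Bool.not_true] <;> ring
  · rw [B2_const_mul (F := F) ((P (τ i) : ℝ) * P (τ i)) ?_]
    · exact mul_nonneg (mul_nonneg (P (τ i)).2 (P (τ i)).2) (hF A τ w)
    · intro x hagr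
      have hfl : flipA A x i = x i := flipA_not_mem hi x
      have hx : x i = τ i := hagr i hi
      push_cast
      rw [hfl, hx]
      ring

lemma Qp_mul_binary {F : (Fin k → Bool) → NNReal} (hF : Qp F) (M : Bool → Bool → NNReal)
    {i j : Fin k} (hij : i ≠ j)
    (hd : ∀ a b, (M a b : ℝ) * M (!a) (!b) = if a = b then 1 else 0)
    (hl : ∀ a a' c, (M a c : ℝ) * M (!a) c = M a' c * M (!a') c)
    (hr : ∀ b b' c, (M c b : ℝ) * M c (!b) = M c b' * M c (!b')) :
    Qp (fun x => F x * M (x i) (x j)) := by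
  intro A τ w
  by_cases hi : i ∈ A <;> by_cases hj : j ∈ A
  · -- both active: half sum over two w's
    have key : ∀ x : Fin k → Bool, agr A τ x →
        ((F x : ℝ) * M (x i) (x j)) * ((F (flipA A x) : ℝ) * M (!x i) (!x j)) * sgnA A x w
          = (((F x : ℝ) * F (flipA A x) * sgnA A x w)
            + ((F x : ℝ) * F (flipA A x)
                * sgnA A x (Function.update (Function.update w i (!w i)) j (!w j)))) / 2 := by
      intro x _
      have hw2 : sgnA A x (Function.update (Function.update w i (!w i)) j (!w j))
          = (if x j then (-1:ℝ) else 1) * ((if x i then (-1:ℝ) else 1) * sgnA A x w) := by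
        have h1 : (Function.update w i (!w i)) j = w j := Function.update_of_ne (Ne.symm hij) _ _
        rw [show (Function.update (Function.update w i (!w i)) j (!w j))
            = (Function.update (Function.update w i (!w i)) j (!(Function.update w i (!w i)) j))
          from by rw [h1], sgnA_flip_w hj, sgnA_flip_w hi]
      rw [hw2]
      have hdd := hd (x i) (x j)
      cases hxi : x i <;> cases hxj : x j <;> rw [hxi, hxj] at hdd <;>
        simp only [Bool.not_false, Bool.not_true, Bool.false_eq_true, Bool.true_eq_false,
          if_true, if_false, eq_self_iff_true] at hdd ⊢ <;>
        linear_combination ((F x : ℝ) * (F (flipA A x) : ℝ) * sgnA A x w) * hdd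
    have hGG : ∀ x : Fin k → Bool,
        ((fun x => F x * M (x i) (x j)) x : ℝ) * ((fun x => F x * M (x i) (x j)) (flipA A x) : ℝ)
          = ((F x : ℝ) * M (x i) (x j)) * ((F (flipA A x) : ℝ) * M (!x i) (!x j)) := by
      intro x
      push_cast
      rw [flipA_mem hi, flipA_mem hj]
    have : B2 (fun x => F x * M (x i) (x j)) A τ w
        = (B2 F A τ w
          + B2 F A τ (Function.update (Function.update w i (!w i)) j (!w j))) / 2 := by
      unfold B2
      rw [add_div, Finset.sum_div, Finset.sum_div, ← Finset.sum_add_distrib]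
      refine Finset.sum_congr rfl fun x _ => ?_
      split_ifs with h
      · rw [hGG x, key x h]
        ring
      · simp
    rw [this]
    have h1 := hF A τ w
    have h2 := hF A τ (Function.update (Function.update w i (!w i)) j (!w j))
    linarith
  · -- i active, j pinned
    rw [B2_const_mul (F := F) ((M false (τ j) : ℝ) * M true (τ j)) ?_]
    · exact mul_nonneg (mul_nonneg (M false (τ j)).2 (M true (τ j)).2) (hF A τ w)
    · intro x hagr
      have hxj : x j = τ j := hagr j hj
      push_cast
      rw [flipA_mem hi, flipA_not_mem hj, hxj]
      have hll := hl (x i) false (τ j)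
      simp only [Bool.not_false] at hll
      linear_combination ((F x : ℝ) * (F (flipA A x) : ℝ)) * hll
  · -- j active, i pinned
    rw [B2_const_mul (F := F) ((M (τ i) false : ℝ) * M (τ i) true) ?_]
    · exact mul_nonneg (mul_nonneg (M (τ i) false).2 (M (τ i) true).2) (hF A τ w)
    · intro x hagr
      have hxi : x i = τ i := hagr i hi
      push_cast
      rw [flipA_mem hj, flipA_not_mem hi, hxi]
      have hrr := hr (x j) false (τ i)
      simp only [Bool.not_false] at hrr
      linear_combination ((F x : ℝ) * (F (flipA A x) : ℝ)) * hrr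
  · -- both pinned
    rw [B2_const_mul (F := F) ((M (τ i) (τ j) : ℝ) * M (τ i) (τ j)) ?_]
    · exact mul_nonneg (mul_nonneg (M (τ i) (τ j)).2 (M (τ i) (τ j)).2) (hF A τ w)
    · intro x hagr
      push_cast
      rw [flipA_not_mem hi, flipA_not_mem hj, hagr i hi, hagr j hj]
      ring

end Aux
namespace Aux

variable {k : ℕ}

noncomputable def SOut (B : Finset (Fin k)) (F : (Fin k → Bool) → NNReal) :
    (Fin k → Bool) → NNReal :=
  fun x => ∑ y : Fin k → Bool, if agr B x y then F y else 0

lemma SOut_empty (F : (Fin k → Bool) → NNReal) : SOut ∅ F = F := by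
  funext x
  unfold SOut
  have h : ∀ y : Fin k → Bool, agr ∅ x y ↔ y = x := by
    intro y
    constructor
    · intro h; funext i; exact h i (Finset.notMem_empty i)
    · rintro rfl i _; rfl
  rw [Finset.sum_congr rfl (fun y _ => by rw [if_congr (h y) rfl rfl])]
  simp

lemma SOut_insert {B : Finset (Fin k)} {i : Fin k} (hi : i ∉ B) (F : (Fin k → Bool) → NNReal) :
    SOut (insert i B) F = sumOut i (SOut B F) := by
  funext x
  unfold sumOut SOut
  rw [← Finset.sum_add_distrib]
  refine Finset.sum_congr rfl fun y _ => ?_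
  exact ite_split_insert (M := NNReal) hi x y (F y)

lemma Qp_SOut (B : Finset (Fin k)) {F : (Fin k → Bool) → NNReal} (hF : Qp F) : Qp (SOut B F) := by
  induction B using Finset.induction_on with
  | empty => rw [SOut_empty]; exact hF
  | insert _ _ hni ih => rw [SOut_insert hni]; exact Qp_sumOut ih

end Aux
namespace Aux

lemma Qp_prod_atoms {N s : ℕ} (a : Fin s → ℕ) (G : ∀ j : Fin s, (Fin (a j) → Bool) → NNReal)
    (idx : ∀ j, Fin (a j) → Fin N)
    (hG : ∀ j, (∃ h : a j = 2,
        (G j = fun x => IMPf (fun t => x (Fin.cast h.symm t))) ∨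
        (G j = fun x => EQ2f (fun t => x (Fin.cast h.symm t)))) ∨ a j = 1) :
    Qp (fun z : Fin N → Bool => ∏ j, G j (fun t => z (idx j t))) := by
  suffices H : ∀ T : Finset (Fin s), Qp (fun z => ∏ j ∈ T, G j (fun t => z (idx j t))) from H _
  intro T
  induction T using Finset.induction_on with
  | empty => simp only [Finset.prod_empty]; exact Qp_one
  | @insert j₀ T hj₀ ih =>
    have hrw : (fun z : Fin N → Bool => ∏ j ∈ insert j₀ T, G j (fun t => z (idx j t)))
        = fun z => (∏ j ∈ T, G j (fun t => z (idx j t))) * G j₀ (fun t => z (idx j₀ t)) := by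
      funext z; rw [Finset.prod_insert hj₀, mul_comm]
    rw [hrw]
    rcases hG j₀ with ⟨h2, hGj | hGj⟩ | h1
    · -- IMP atom
      set i1 := idx j₀ (Fin.cast h2.symm 0) with hi1
      set i2 := idx j₀ (Fin.cast h2.symm 1) with hi2
      set MI : Bool → Bool → NNReal := fun p q => if p = true ∧ q = false then 0 else 1 with hMI
      have hval : ∀ z : Fin N → Bool, G j₀ (fun t => z (idx j₀ t)) = MI (z i1) (z i2) := by
        intro z; rw [hGj]; rfl
      by_cases he : i1 = i2
      · have hone : (fun z : Fin N → Bool =>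
            (∏ j ∈ T, G j (fun t => z (idx j t))) * G j₀ (fun t => z (idx j₀ t)))
            = fun z => ∏ j ∈ T, G j (fun t => z (idx j t)) := by
          funext z
          rw [hval, ← he]
          cases hz : z i1 <;> simp [hMI]
        rw [hone]; exact ih
      · have hfun : (fun z : Fin N → Bool =>
            (∏ j ∈ T, G j (fun t => z (idx j t))) * G j₀ (fun t => z (idx j₀ t)))
            = fun z => (∏ j ∈ T, G j (fun t => z (idx j t))) * MI (z i1) (z i2) := by
          funext z; rw [hval]
        rw [hfun]
        refine Qp_mul_binary ih MI he ?_ ?_ ?_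
        · intro p q; cases p <;> cases q <;> simp [hMI]
        · intro p p' c; cases p <;> cases p' <;> cases c <;> simp [hMI]
        · intro p p' c; cases p <;> cases p' <;> cases c <;> simp [hMI]
    · -- EQ2 atom
      set i1 := idx j₀ (Fin.cast h2.symm 0) with hi1
      set i2 := idx j₀ (Fin.cast h2.symm 1) with hi2
      set ME : Bool → Bool → NNReal := fun p q => if p = q then 1 else 0 with hME
      have hval : ∀ z : Fin N → Bool, G j₀ (fun t => z (idx j₀ t)) = ME (z i1) (z i2) := by
        intro z; rw [hGj]; rfl
      by_cases he : i1 = i2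
      · have hone : (fun z : Fin N → Bool =>
            (∏ j ∈ T, G j (fun t => z (idx j t))) * G j₀ (fun t => z (idx j₀ t)))
            = fun z => ∏ j ∈ T, G j (fun t => z (idx j t)) := by
          funext z
          rw [hval, ← he]
          simp [hME]
        rw [hone]; exact ih
      · have hfun : (fun z : Fin N → Bool =>
            (∏ j ∈ T, G j (fun t => z (idx j t))) * G j₀ (fun t => z (idx j₀ t)))
            = fun z => (∏ j ∈ T, G j (fun t => z (idx j t))) * ME (z i1) (z i2) := by
          funext z; rw [hval]
        rw [hfun]
        refine Qp_mul_binary ih ME he ?_ ?_ ?_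
        · intro p q; cases p <;> cases q <;> simp [hME]
        · intro p p' c; cases p <;> cases p' <;> cases c <;> simp [hME]
        · intro p p' c; cases p <;> cases p' <;> cases c <;> simp [hME]
    · -- unary atom
      have h0 : 0 < a j₀ := by omega
      set i0 : Fin (a j₀) := ⟨0, h0⟩ with hi0
      set P : Bool → NNReal := fun b => G j₀ (fun _ => b) with hP
      have hval : ∀ z : Fin N → Bool, G j₀ (fun t => z (idx j₀ t)) = P (z (idx j₀ i0)) := by
        intro z
        rw [hP]
        congr 1
        funext t
        have ht : t = i0 := by
          apply Fin.ext
          have := t.isLt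
          omega
        rw [ht]
      have hfun : (fun z : Fin N → Bool =>
          (∏ j ∈ T, G j (fun t => z (idx j t))) * G j₀ (fun t => z (idx j₀ t)))
          = fun z => (∏ j ∈ T, G j (fun t => z (idx j t))) * P (z (idx j₀ i0)) := by
        funext z; rw [hval]
      rw [hfun]
      exact Qp_mul_unary ih P (idx j₀ i0)

end Aux
namespace Aux

lemma prod_sign_eq_pow {n : ℕ} (x w : Fin n → Bool) :
    (∏ i : Fin n, (if x i && w i then (-1 : ℝ) else 1)) = (-1 : ℝ) ^ dotB x w := by
  unfold dotB
  rw [← Finset.prod_pow_eq_pow_sum]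
  exact Finset.prod_congr rfl fun i _ => by split_ifs <;> simp

lemma clone_nonneg {n : ℕ} (SF : ∀ k : ℕ, ((Fin k → Bool) → NNReal) → Prop)
    (hSF : ∀ k H, SF k H →
      (∃ h : k = 2, H = fun x => IMPf (fun t => x (Fin.cast h.symm t))) ∨ k = 1)
    {F : (Fin n → Bool) → NNReal} (hF : CloneMem SF n F) (w : Fin n → Bool) :
    0 ≤ Bfn F w := by
  obtain ⟨m, s, a, G, idx, hG, hrep⟩ := hF
  set Θ : (Fin (n + m) → Bool) → NNReal := fun z => ∏ j, G j (fun t => z (idx j t)) with hΘ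
  have hQΘ : Qp Θ := by
    refine Qp_prod_atoms a G idx fun j => ?_
    rcases hG j with hSFj | ⟨h2, hEq⟩
    · rcases hSF _ _ hSFj with ⟨h2, hImp⟩ | h1
      · exact Or.inl ⟨h2, Or.inl hImp⟩
      · exact Or.inr h1
    · exact Or.inl ⟨h2, Or.inr hEq⟩
  set Bt : Finset (Fin (n + m)) := Finset.univ.filter (fun i => ¬ ((i : ℕ) < n)) with hBt
  set A : Finset (Fin (n + m)) := Finset.univ.filter (fun i => (i : ℕ) < n) with hA
  have hQΨ : Qp (SOut Bt Θ) := Qp_SOut Bt hQΘ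
  have hAmem : ∀ i : Fin (n + m), i ∈ A ↔ (i : ℕ) < n := by
    intro i; simp [hA]
  have hBtmem : ∀ i : Fin (n + m), i ∉ Bt ↔ (i : ℕ) < n := by
    intro i; simp [hBt]
  -- Ψ on appended vectors computes F
  have hPsi : ∀ x : Fin n → Bool, SOut Bt Θ (Fin.append x (fun _ => false)) = F x := by
    intro x
    rw [hrep x]
    unfold SOut
    rw [← Finset.sum_filter]
    refine Finset.sum_nbij' (fun y' => fun jj : Fin m => y' (Fin.natAdd n jj))
      (fun y => Fin.append x y) (fun y' _ => Finset.mem_univ _) ?_ ?_ ?_ ?_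
    · intro y _
      rw [Finset.mem_filter]
      refine ⟨Finset.mem_univ _, fun i hi => ?_⟩
      rw [hBtmem] at hi
      have hieq : i = Fin.castAdd m ⟨(i : ℕ), hi⟩ := by
        apply Fin.ext; simp
      rw [hieq, Fin.append_left, Fin.append_left]
    · intro y' hy'
      rw [Finset.mem_filter] at hy'
      funext i
      refine Fin.addCases (fun i' => ?_) (fun i' => ?_) i
      · rw [Fin.append_left]
        have hmem : Fin.castAdd m i' ∉ Bt := by
          rw [hBtmem]; simp [i'.isLt]
        have := hy'.2 _ hmem
        rw [this, Fin.append_left]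
      · rw [Fin.append_right]
    · intro y _
      funext jj
      rw [Fin.append_right]
    · intro y' hy'
      rw [Finset.mem_filter] at hy'
      congr 1
      funext i
      refine Fin.addCases (fun i' => ?_) (fun i' => ?_) i
      · rw [Fin.append_left]
        have hmem : Fin.castAdd m i' ∉ Bt := by
          rw [hBtmem]; simp [i'.isLt]
        have := hy'.2 _ hmem
        rw [this, Fin.append_left]
      · rw [Fin.append_right]
  have hflip : ∀ x : Fin n → Bool,
      flipA A (Fin.append x (fun _ => false))
        = Fin.append (fun i => !x i) (fun _ => false) := by
    intro x
    funext i
    refine Fin.addCases (fun i' => ?_) (fun i' => ?_) i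
    · have hmem : Fin.castAdd m i' ∈ A := by rw [hAmem]; simp [i'.isLt]
      rw [flipA_mem hmem, Fin.append_left, Fin.append_left]
    · have hmem : Fin.natAdd n i' ∉ A := by rw [hAmem]; simp
      rw [flipA_not_mem hmem, Fin.append_right, Fin.append_right]
  have hAmap : A = Finset.univ.map (Fin.castAddEmb m) := by
    ext i
    rw [hAmem, Finset.mem_map]
    constructor
    · intro hi
      exact ⟨⟨(i : ℕ), hi⟩, Finset.mem_univ _, by apply Fin.ext; simp [Fin.castAddEmb]⟩
    · rintro ⟨i', -, rfl⟩
      simp [Fin.castAddEmb, i'.isLt]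
  have hsgn : ∀ x : Fin n → Bool,
      sgnA A (Fin.append x (fun _ => false)) (Fin.append w (fun _ => false))
        = (-1 : ℝ) ^ dotB x w := by
    intro x
    rw [← prod_sign_eq_pow x w]
    unfold sgnA
    rw [hAmap, Finset.prod_map]
    refine Finset.prod_congr rfl fun i' _ => ?_
    have : (Fin.castAddEmb m) i' = Fin.castAdd m i' := rfl
    rw [this, Fin.append_left, Fin.append_left]
  have hmain : B2 (SOut Bt Θ) A (fun _ => false) (Fin.append w (fun _ => false)) = Bfn F w := by
    unfold B2 Bfn
    rw [← Finset.sum_filter]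
    refine Finset.sum_nbij' (fun z => fun i' : Fin n => z (Fin.castAdd m i'))
      (fun x => Fin.append x (fun _ => false)) (fun z _ => Finset.mem_univ _) ?_ ?_ ?_ ?_
    · intro x _
      rw [Finset.mem_filter]
      refine ⟨Finset.mem_univ _, fun i hi => ?_⟩
      rw [hAmem] at hi
      have hieq : i = Fin.natAdd n ⟨(i : ℕ) - n, by omega⟩ := by
        apply Fin.ext; simp; omega
      dsimp only
      rw [hieq, Fin.append_right]
    · intro z hz
      rw [Finset.mem_filter] at hz
      funext i
      refine Fin.addCases (fun i' => ?_) (fun i' => ?_) i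
      · rw [Fin.append_left]
      · rw [Fin.append_right]
        have hmem : Fin.natAdd n i' ∉ A := by rw [hAmem]; simp
        exact (hz.2 _ hmem).symm
    · intro x _
      funext i'
      rw [Fin.append_left]
    · intro z hz
      rw [Finset.mem_filter] at hz
      have hzeq : z = Fin.append (fun i' : Fin n => z (Fin.castAdd m i')) (fun _ => false) := by
        funext i
        refine Fin.addCases (fun i' => ?_) (fun i' => ?_) i
        · rw [Fin.append_left]
        · rw [Fin.append_right]
          have hmem : Fin.natAdd n i' ∉ A := by rw [hAmem]; simp
          exact hz.2 _ hmem
      conv_lhs => rw [hzeq]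
      rw [hPsi, hflip, hPsi, hsgn]
  rw [← hmain]
  exact hQΨ A (fun _ => false) (Fin.append w (fun _ => false))

end Aux
namespace Aux

def Fn : ℕ → ℕ := fun t => if t = 4 then 4 else if t = 3 then 2 else 1

def wt4 (x : Fin 4 → Bool) : ℕ := ∑ i, if x i then 1 else 0

lemma lsm_key : ∀ x y : Fin 4 → Bool,
    Fn (wt4 x) * Fn (wt4 y) ≤ Fn (wt4 fun i => x i || y i) * Fn (wt4 fun i => x i && y i) := by
  decide

lemma Sfn_eq (x : Fin 4 → Bool) : Sfn x = ((Fn (wt4 x) : ℕ) : NNReal) := by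
  unfold Sfn Fn wt4
  split_ifs <;> norm_num

lemma Sfn_lsm : IsLSM Sfn := by
  intro x y
  rw [Sfn_eq, Sfn_eq, Sfn_eq, Sfn_eq, ← Nat.cast_mul, ← Nat.cast_mul, Nat.cast_le]
  exact lsm_key x y

lemma Sfn_le (x : Fin 4 → Bool) : (Sfn x : ℝ) ≤ 4 := by
  rw [Sfn_eq]
  have h : Fn (wt4 x) ≤ 4 := by unfold Fn; split_ifs <;> omega
  exact_mod_cast h

lemma Bint_eq : (∑ x : Fin 4 → Bool,
    (Fn (wt4 x) : ℤ) * (Fn (wt4 fun i => !x i) : ℤ) * (-1 : ℤ) ^ (dotB x (fun _ => true)))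
    = -2 := by decide

lemma Bfn_Sfn : Bfn Sfn (fun _ => true) = -2 := by
  have h : Bfn Sfn (fun _ => true)
      = ((∑ x : Fin 4 → Bool,
          (Fn (wt4 x) : ℤ) * (Fn (wt4 fun i => !x i) : ℤ)
            * (-1 : ℤ) ^ (dotB x (fun _ => true))) : ℤ) := by
    unfold Bfn
    push_cast
    refine Finset.sum_congr rfl fun x _ => ?_
    rw [Sfn_eq, Sfn_eq]
    push_cast
    ring
  rw [h, Bint_eq]
  norm_num

end Aux
theorem stmt19 :
    ∃ S : (Fin 4 → Bool) → NNReal, IsLSM S ∧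
      ¬ PpsOmegaDef (fun k H =>
          (∃ h : k = 2, H = fun x => IMPf (fun t => x (Fin.cast h.symm t))) ∨ k = 1)
        4 S := by
  refine ⟨Sfn, Aux.Sfn_lsm, ?_⟩
  rintro ⟨SF, hsub, -, happ⟩
  obtain ⟨Fh, hclone, hap⟩ := happ (1/100) (by norm_num)
  have hnn : 0 ≤ Bfn Fh (fun _ => true) := Aux.clone_nonneg SF hsub hclone (fun _ => true)
  have hS : Bfn Sfn (fun _ => true) = -2 := Aux.Bfn_Sfn
  have hcard : (Finset.univ : Finset (Fin 4 → Bool)).card = 16 := by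
    simp [Finset.card_univ]
  have hb : Bfn Fh (fun _ => true) ≤ Bfn Sfn (fun _ => true) + 16 * (9/100) := by
    unfold Bfn
    have hstep : ∀ x : Fin 4 → Bool,
        (Fh x : ℝ) * (Fh (fun i => !x i) : ℝ) * (-1 : ℝ) ^ dotB x (fun _ => true)
          ≤ (Sfn x : ℝ) * (Sfn (fun i => !x i) : ℝ) * (-1 : ℝ) ^ dotB x (fun _ => true)
            + 9/100 := by
      intro x
      have h1 := hap x
      have h2 := hap (fun i => !x i)
      have h1' := abs_lt.1 h1
      have h2' := abs_lt.1 h2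
      have hb1 : (Sfn x : ℝ) ≤ 4 := Aux.Sfn_le x
      have hb2 : (Sfn (fun i => !x i) : ℝ) ≤ 4 := Aux.Sfn_le _
      have hn1 : (0 : ℝ) ≤ Fh x := (Fh x).2
      have hn2 : (0 : ℝ) ≤ Fh (fun i => !x i) := (Fh (fun i => !x i)).2
      have hn3 : (0 : ℝ) ≤ Sfn x := (Sfn x).2
      have hn4 : (0 : ℝ) ≤ Sfn (fun i => !x i) := (Sfn (fun i => !x i)).2
      have habs : |(Fh x : ℝ) * (Fh (fun i => !x i) : ℝ)
          - (Sfn x : ℝ) * (Sfn (fun i => !x i) : ℝ)| ≤ 9/100 := by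
        rw [abs_le]
        constructor <;> nlinarith
      have habs' := abs_le.1 habs
      rcases neg_one_pow_eq_or ℝ (dotB x (fun _ => true)) with hσ | hσ <;> rw [hσ] <;>
        nlinarith
    calc ∑ x : Fin 4 → Bool, (Fh x : ℝ) * (Fh (fun i => !x i) : ℝ)
            * (-1 : ℝ) ^ dotB x (fun _ => true)
        ≤ ∑ x : Fin 4 → Bool, ((Sfn x : ℝ) * (Sfn (fun i => !x i) : ℝ)
            * (-1 : ℝ) ^ dotB x (fun _ => true) + 9/100) :=
          Finset.sum_le_sum fun x _ => hstep x
      _ = (∑ x : Fin 4 → Bool, (Sfn x : ℝ) * (Sfn (fun i => !x i) : ℝ)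
            * (-1 : ℝ) ^ dotB x (fun _ => true)) + 16 * (9/100) := by
          rw [Finset.sum_add_distrib, Finset.sum_const, hcard, nsmul_eq_mul]
          norm_num
  rw [hS] at hb
  linarith
end
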